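/- Let (Ω, 𝓕, (𝓕_s)_{s∈[0,L]}, P) be a filtered probability space, ℓ_p > 0, and let Q : [0,L] × Ω → ℝ³ be a progressively measurable process with |Q_s| ≤ 1 almost surely for every s, and Q₀ = e₃ almost surely. Suppose that the process M_s := Q_s·e₃ − 1 + (2/ℓ_p) ∫₀^s Q_u·e₃ du, 0 ≤ s ≤ L, is a martingale with respect to (𝓕_s). Then E[Q_s·e₃] = e^{−2s/ℓ_p} for every s ∈ [0, L]. -/

import Mathlib

open MeasureTheory Real
open scoped RealInnerProductSpace

/-- If `Q` is a progressively measurable process on `[0,L]` with values in the unit ball of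
`ℝ³`, starting at `e₃`, and `M_s = Q_s·e₃ - 1 + (2/ℓ_p) ∫₀^s Q_u·e₃ du` is a martingale on
`[0,L]`, then `E[Q_s·e₃] = e^{-2s/ℓ_p}` for every `s ∈ [0,L]`. -/
theorem tangent_correlation_decay
    {Ω : Type*} {m0 : MeasurableSpace Ω} {P : Measure Ω} [IsProbabilityMeasure P]
    (𝓕 : Filtration ℝ m0) (L ℓp : ℝ) (hL : 0 < L) (hℓp : 0 < ℓp)
    (e₃ : EuclideanSpace ℝ (Fin 3)) (he₃ : e₃ = (WithLp.equiv 2 (Fin 3 → ℝ)).symm ![0, 0, 1])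
    (Q : ℝ → Ω → EuclideanSpace ℝ (Fin 3))
    (hQprog : ProgMeasurable 𝓕 Q)
    (hQbdd : ∀ s ∈ Set.Icc (0 : ℝ) L, ∀ᵐ ω ∂P, ‖Q s ω‖ ≤ 1)
    (hQ0 : ∀ᵐ ω ∂P, Q 0 ω = e₃)
    (M : ℝ → Ω → ℝ)
    (hM : ∀ s ∈ Set.Icc (0 : ℝ) L, ∀ ω,
      M s ω = ⟪Q s ω, e₃⟫ - 1 + (2 / ℓp) * ∫ u in (0 : ℝ)..s, ⟪Q u ω, e₃⟫)
    (hMint : ∀ s ∈ Set.Icc (0 : ℝ) L, Integrable (M s) P)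
    (hMadapted : ∀ s ∈ Set.Icc (0 : ℝ) L, StronglyMeasurable[𝓕 s] (M s))
    (hMmart : ∀ s ∈ Set.Icc (0 : ℝ) L, ∀ t ∈ Set.Icc (0 : ℝ) L, s ≤ t →
      P[M t | 𝓕 s] =ᵐ[P] M s) :
    ∀ s ∈ Set.Icc (0 : ℝ) L, ∫ ω, ⟪Q s ω, e₃⟫ ∂P = Real.exp (-2 * s / ℓp) := by
  classical
  set c : ℝ := 2 / ℓp with hc
  have hcpos : 0 < c := div_pos two_pos hℓp
  set g : ℝ → Ω → ℝ := fun u ω => ⟪Q u ω, e₃⟫ with hg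
  set f : ℝ → ℝ := fun u => ∫ ω, g u ω ∂P with hf
  set F : ℝ → ℝ := fun s => ∫ u in (0:ℝ)..s, f u with hF
  have hinner1 : ⟪e₃, e₃⟫ = (1:ℝ) := by
    simp [he₃, PiLp.inner_apply, Fin.sum_univ_three, EuclideanSpace.norm_eq]
  have hnorm1 : ‖e₃‖ = 1 := by
    simp [he₃, EuclideanSpace.norm_eq, Fin.sum_univ_three]
  have hcontinner : Continuous fun x : EuclideanSpace ℝ (Fin 3) => ⟪x, e₃⟫ :=
    continuous_id.inner continuous_const
  -- measurability of g u
  have hgm : ∀ u : ℝ, AEStronglyMeasurable (g u) P := by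
    intro u
    exact (hcontinner.comp_stronglyMeasurable
      ((IsStronglyProgressive.stronglyAdapted hQprog u).mono (𝓕.le u))).aestronglyMeasurable
  have hgbdd : ∀ u ∈ Set.Icc (0:ℝ) L, ∀ᵐ ω ∂P, ‖g u ω‖ ≤ 1 := by
    intro u hu
    filter_upwards [hQbdd u hu] with ω hω
    calc ‖g u ω‖ ≤ ‖Q u ω‖ * ‖e₃‖ := by
          simpa [hg, Real.norm_eq_abs] using abs_real_inner_le_norm (Q u ω) e₃
      _ ≤ 1 := by rw [hnorm1, mul_one]; exact hω
  have hgint : ∀ u ∈ Set.Icc (0:ℝ) L, Integrable (g u) P := by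
    intro u hu
    exact Integrable.mono' (integrable_const 1) (hgm u) (hgbdd u hu)
  -- joint a.e. strong measurability on products
  have hjoint : ∀ s, 0 ≤ s →
      AEStronglyMeasurable (fun p : ℝ × Ω => g p.1 p.2)
        ((volume.restrict (Set.Ioc 0 s)).prod P) := by
    intro s hs0
    have hφ : @Measurable (ℝ × Ω) (Set.Iic s × Ω) (Prod.instMeasurableSpace)
        (@Prod.instMeasurableSpace _ _ _ (𝓕 s))
        (fun p : ℝ × Ω => ((⟨min p.1 s, Set.mem_Iic.mpr (min_le_right _ _)⟩ : Set.Iic s), p.2)) := by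
      apply Measurable.prodMk
      · exact Measurable.subtype_mk (measurable_fst.min measurable_const)
      · exact measurable_snd.mono le_rfl (𝓕.le s)
    have hQm : StronglyMeasurable (fun p : ℝ × Ω => Q (min p.1 s) p.2) :=
      (hQprog s).comp_measurable hφ
    have hGm : StronglyMeasurable (fun p : ℝ × Ω => ⟪Q (min p.1 s) p.2, e₃⟫) :=
      hcontinner.comp_stronglyMeasurable hQm
    refine hGm.aestronglyMeasurable.congr ?_
    have hnull : ((volume.restrict (Set.Ioc 0 s)).prod P) {p : ℝ × Ω | p.1 ∉ Set.Ioc 0 s} = 0 := by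
      have : {p : ℝ × Ω | p.1 ∉ Set.Ioc 0 s} = (Set.Ioc 0 s)ᶜ ×ˢ Set.univ := by
        ext p; simp
      rw [this, Measure.prod_prod, Measure.restrict_apply measurableSet_Ioc.compl]
      simp
    filter_upwards [(ae_iff.mpr hnull : ∀ᵐ p ∂_, p.1 ∈ Set.Ioc 0 s)] with p hp
    simp [hg, min_eq_left hp.2]
  -- integrability on products
  have hprod : ∀ s ∈ Set.Icc (0:ℝ) L,
      Integrable (fun p : ℝ × Ω => g p.1 p.2) ((volume.restrict (Set.Ioc 0 s)).prod P) := by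
    intro s hs
    haveI : IsFiniteMeasure (volume.restrict (Set.Ioc (0:ℝ) s)) := by
      constructor
      rw [Measure.restrict_apply_univ]
      simp [Real.volume_Ioc]
    refine (integrable_prod_iff (hjoint s hs.1)).mpr ⟨?_, ?_⟩
    · filter_upwards [ae_restrict_mem measurableSet_Ioc] with u hu
      exact hgint u ⟨hu.1.le, hu.2.trans hs.2⟩
    · refine Integrable.mono' (integrable_const 1)
        ((hjoint s hs.1).norm.integral_prod_right') ?_
      filter_upwards [ae_restrict_mem measurableSet_Ioc] with u hu
      have huL : u ∈ Set.Icc (0:ℝ) L := ⟨hu.1.le, hu.2.trans hs.2⟩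
      have h1 : ∫ ω, ‖g u ω‖ ∂P ≤ ∫ _ω, (1:ℝ) ∂P :=
        integral_mono_ae ((hgint u huL).norm) (integrable_const 1) (hgbdd u huL)
      have h2 : (0:ℝ) ≤ ∫ ω, ‖g u ω‖ ∂P := integral_nonneg fun ω => norm_nonneg _
      rw [Real.norm_eq_abs, abs_of_nonneg h2]
      simpa using h1
  -- Fubini
  have hswap : ∀ s ∈ Set.Icc (0:ℝ) L,
      ∫ ω, (∫ u in Set.Ioc (0:ℝ) s, g u ω) ∂P = ∫ u in Set.Ioc (0:ℝ) s, f u := by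
    intro s hs
    exact (integral_integral_swap (hprod s hs)).symm
  -- integrability of f on Ioc 0 L
  have hfint : IntegrableOn f (Set.Ioc 0 L) volume := by
    have := (hprod L ⟨hL.le, le_refl L⟩).integral_prod_left
    exact this
  -- key integral equation
  have key : ∀ s ∈ Set.Icc (0:ℝ) L, f s = 1 - c * F s := by
    intro s hs
    have h0L : (0:ℝ) ∈ Set.Icc (0:ℝ) L := ⟨le_refl 0, hL.le⟩
    -- E[M s] = E[M 0]
    have hEM : ∫ ω, M s ω ∂P = ∫ ω, M 0 ω ∂P := by
      have h1 := hMmart 0 h0L s hs hs.1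
      have h2 : ∫ ω, (P[M s | 𝓕 0]) ω ∂P = ∫ ω, M s ω ∂P :=
        integral_condExp (𝓕.le 0)
      rw [← h2]
      exact integral_congr_ae h1.symm |>.symm
    -- E[M 0] = 0
    have hEM0 : ∫ ω, M 0 ω ∂P = 0 := by
      have : M 0 =ᵐ[P] fun _ => (0:ℝ) := by
        filter_upwards [hQ0] with ω hω
        rw [hM 0 h0L ω, intervalIntegral.integral_same, hω, hinner1]
        ring
      rw [integral_congr_ae this, integral_zero]
    -- splitting
    have hA : Integrable (fun ω => g s ω - 1) P := (hgint s hs).sub (integrable_const 1)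
    have hB : Integrable (fun ω => c * ∫ u in (0:ℝ)..s, g u ω) P := by
      have : (fun ω => c * ∫ u in (0:ℝ)..s, g u ω)
          = fun ω => M s ω - (g s ω - 1) := by
        funext ω; rw [hM s hs ω]; ring
      rw [this]
      exact (hMint s hs).sub hA
    have hMs : ∫ ω, M s ω ∂P
        = (f s - 1) + c * ∫ ω, (∫ u in Set.Ioc (0:ℝ) s, g u ω) ∂P := by
      have hMeq : (M s) = fun ω => (g s ω - 1) + c * ∫ u in (0:ℝ)..s, g u ω := by
        funext ω; rw [hM s hs ω]
      rw [hMeq, integral_add hA hB, integral_sub (hgint s hs) (integrable_const 1),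
        integral_const_mul]
      have : ∀ ω, (∫ u in (0:ℝ)..s, g u ω) = ∫ u in Set.Ioc (0:ℝ) s, g u ω := by
        intro ω; exact intervalIntegral.integral_of_le hs.1
      simp only [this]
      simp [hf]
    have hFs : F s = ∫ u in Set.Ioc (0:ℝ) s, f u := intervalIntegral.integral_of_le hs.1
    have : 0 = (f s - 1) + c * F s := by
      rw [hFs, ← hswap s hs, ← hMs, hEM, hEM0]
    linarith
  -- continuity of F on Icc 0 L
  have hFcont : ContinuousOn F (Set.Icc 0 L) := by
    have h1 : IntegrableOn f (Set.Icc 0 L) volume :=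
      (integrableOn_Icc_iff_integrableOn_Ioc).mpr hfint
    refine (intervalIntegral.continuousOn_primitive h1).congr ?_
    intro x hx
    exact intervalIntegral.integral_of_le hx.1
  have hfcont : ContinuousOn f (Set.Icc 0 L) := by
    have h : ContinuousOn (fun x => 1 - c * F x) (Set.Icc 0 L) :=
      continuousOn_const.sub (continuousOn_const.mul hFcont)
    exact h.congr fun x hx => key x hx
  -- right derivative of F
  have hFd : ∀ x ∈ Set.Ico (0:ℝ) L, HasDerivWithinAt F (f x) (Set.Ici x) x := by
    intro x hx
    have hint : IntervalIntegrable f volume 0 x := by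
      rw [intervalIntegrable_iff_integrableOn_Ioc_of_le hx.1]
      exact hfint.mono_set (Set.Ioc_subset_Ioc le_rfl hx.2.le)
    have hmeas : StronglyMeasurableAtFilter f (nhdsWithin x (Set.Ioi x)) := by
      refine ⟨Set.Ioc x L, Ioc_mem_nhdsGT_of_mem ⟨le_refl x, hx.2⟩, ?_⟩
      exact hfint.aestronglyMeasurable.mono_measure
        (Measure.restrict_mono (Set.Ioc_subset_Ioc hx.1 le_rfl) le_rfl)
    have hcw : ContinuousWithinAt f (Set.Ioi x) x := by
      have hmem : Set.Icc (0:ℝ) L ∈ nhdsWithin x (Set.Ioi x) := by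
        refine mem_nhdsWithin.mpr ⟨Set.Iio L, isOpen_Iio, hx.2, ?_⟩
        rintro u ⟨hu1, hu2⟩
        exact ⟨hx.1.trans (le_of_lt hu2), le_of_lt hu1⟩
      exact (hfcont x ⟨hx.1, hx.2.le⟩).mono_left (nhdsWithin_le_of_mem hmem)
    exact intervalIntegral.integral_hasDerivWithinAt_right hint hmeas hcw
  -- compare with explicit solution via eq_of_has_deriv_right_eq
  set Ft : ℝ → ℝ := fun x => Real.exp (c * x) * F x with hFt
  set Gt : ℝ → ℝ := fun x => (Real.exp (c * x) - 1) / c with hGt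
  have hexp : ∀ x : ℝ, HasDerivAt (fun y => Real.exp (c * y)) (c * Real.exp (c * x)) x := by
    intro x
    have h1 : HasDerivAt (fun y : ℝ => c * y) c x := by
      simpa using (hasDerivAt_id x).const_mul c
    simpa [mul_comm] using h1.exp
  have heqd : ∀ y ∈ Set.Icc (0:ℝ) L, Ft y = Gt y := by
    refine eq_of_has_deriv_right_eq (f' := fun x => Real.exp (c * x)) ?_ ?_ ?_ ?_ ?_
    · intro x hx
      have h := ((hexp x).hasDerivWithinAt (s := Set.Ici x)).mul (hFd x hx)
      have harg : c * Real.exp (c * x) * F x + Real.exp (c * x) * f x = Real.exp (c * x) := by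
        rw [key x ⟨hx.1, hx.2.le⟩]; ring
      rwa [harg] at h
    · intro x hx
      have h := (((hexp x).hasDerivWithinAt (s := Set.Ici x)).sub_const 1).div_const c
      have harg : c * Real.exp (c * x) / c = Real.exp (c * x) := by
        field_simp
      rwa [harg] at h
    · exact ((Real.continuous_exp.comp (continuous_const.mul continuous_id)).continuousOn).mul hFcont
    · exact ((Real.continuous_exp.comp (continuous_const.mul continuous_id)).sub
        continuous_const).continuousOn.div_const c
    · simp [hFt, hGt, hF]
  -- conclude
  intro s hs
  have hE : Real.exp (c * s) ≠ 0 := (Real.exp_pos _).ne'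
  have h1 := heqd s hs
  simp only [hFt, hGt] at h1
  have h2 : c * (Real.exp (c * s) * F s) = Real.exp (c * s) - 1 := by
    rw [h1]; field_simp
  have h3 : f s * Real.exp (c * s) = 1 := by
    linear_combination Real.exp (c * s) * (key s hs) - h2
  have h4 : f s = Real.exp (-(c * s)) := by
    rw [Real.exp_neg, inv_eq_one_div, eq_div_iff hE]; exact h3
  have harg : -(c * s) = -2 * s / ℓp := by rw [hc]; ring
  rw [← harg, ← h4]
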